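/- Define the min kernel k_min(G,G') = Σ_{F : v(F) ≤ min(v(G),v(G'))} hom(F,G)·hom(F,G'), where the sum ranges over isomorphism classes of graphs with at most min(v(G),v(G')) vertices. Then k_min is a complete kernel on the set of all finite graphs: k_min(G,G) − 2k_min(G,G') + k_min(G',G') = 0 if and only if G ≅ G'. -/

import Mathlib

/-- The min kernel: `k_min(G,G') = ∑_{F : v(F) ≤ min(v(G), v(G'))} hom(F,G)·hom(F,G')`,
summing over (representatives of) all graphs with at most `min(v(G), v(G'))` vertices. -/
noncomputable def minKernel {m m' : ℕ} (G : SimpleGraph (Fin m)) (G' : SimpleGraph (Fin m')) : ℝ :=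
  ∑ F : Σ k : Fin (min m m' + 1), SimpleGraph (Fin k.val),
    (Nat.card (F.2 →g G) : ℝ) * (Nat.card (F.2 →g G') : ℝ)

/-!
Split the kernel expression as `∑_F (hom(F,G) - hom(F,G'))²` over `v(F) ≤ min(v(G), v(G'))`,
plus, when `v(G) < v(G')`, the terms `hom(F,G')²` with `v(G) < v(F) ≤ v(G')`, which are positive
at the edgeless `F` on `v(G) + 1` vertices. So the expression vanishes iff `v(G) = v(G')` and all
these homomorphism counts agree. Then Lovász's argument applies: sorting the homomorphisms
`F → G` by their kernel `s` gives `hom(F,G) = inj(F,G) + ∑_{s ≠ ⊥} inj(F/s, G)`, so by induction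
on `v(F)` the injective counts agree too. Injective homomorphisms `G → G'` and `G' → G` are then
bijective on vertices and on edges, hence isomorphisms.
-/

open Function

instance Setoid.instFinite {α : Type*} [Finite α] : Finite (Setoid α) :=
  Finite.of_injective (fun s : Setoid α => s.r) fun _ _ h =>
    Setoid.ext fun a b => iff_of_eq (congrFun (congrFun h a) b)

theorem Setoid.card_quotient_lt {α : Type*} [Finite α] {s : Setoid α} (hs : s ≠ ⊥) :
    Nat.card (Quotient s) < Nat.card α := by
  have hsurj : Surjective (Quotient.mk s) := Quotient.mk_surjective
  have hinj : ¬ Injective (Quotient.mk s) := by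
    rwa [injective_iff_ker_bot, ← Quotient.mk''_eq_mk, ker_mk_eq]
  exact (Nat.card_le_card_of_surjective _ hsurj).lt_of_ne
    fun h => hinj (hsurj.bijective_of_nat_card_le h.ge).1

namespace SimpleGraph

section

variable {α β : Type*}

instance [Finite α] [Finite β] (F : SimpleGraph α) (G : SimpleGraph β) : Finite (F.Copy G) :=
  DFunLike.finite _

theorem Copy.nonempty_iso [Finite α] [Finite β] {F : SimpleGraph α} {G : SimpleGraph β}
    (f : F.Copy G) (g : G.Copy F) : Nonempty (F ≃g G) := by
  have hV : Bijective f := f.injective.bijective_of_nat_card_le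
    (Nat.card_le_card_of_injective g g.injective)
  have hE : Surjective f.mapEdgeSet := (f.mapEdgeSet.injective.bijective_of_nat_card_le
    (Nat.card_le_card_of_injective _ g.mapEdgeSet.injective)).2
  refine ⟨⟨Equiv.ofBijective f hV, fun {u v} => ⟨fun h => ?_, f.toHom.map_adj⟩⟩⟩
  obtain ⟨⟨e, he⟩, hfe⟩ := hE ⟨s(f u, f v), h⟩
  have : e = s(u, v) := Sym2.map.injective f.injective (congrArg Subtype.val hfe)
  rwa [this] at he

/-- The quotient of `F` by `s`; edges inside a class of `s` are dropped. -/
def quotientGraph (F : SimpleGraph α) (s : Setoid α) : SimpleGraph (Quotient s) :=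
  fromRel (Relation.Map F.Adj (Quotient.mk s) (Quotient.mk s))

def toQuotientGraph (F : SimpleGraph α) {s : Setoid α} (hs : ∀ ⦃u v⦄, F.Adj u v → ¬ s u v) :
    F →g F.quotientGraph s where
  toFun := Quotient.mk s
  map_rel' {u v} h :=
    (fromRel_adj _ _ _).2 ⟨fun he => hs h (Quotient.exact he), .inl ⟨u, v, h, rfl, rfl⟩⟩

def homKerEquivCopy {F : SimpleGraph α} (G : SimpleGraph β) {s : Setoid α}
    (hs : ∀ ⦃u v⦄, F.Adj u v → ¬ s u v) :
    {f : F →g G // Setoid.ker f = s} ≃ (F.quotientGraph s).Copy G where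
  toFun f :=
    { toHom :=
        { toFun := Quotient.lift f.1 fun u v h => by rw [← f.2] at h; exact h
          map_rel' := by
            rintro x y ⟨-, ⟨u, v, h, rfl, rfl⟩ | ⟨u, v, h, rfl, rfl⟩⟩
            · exact f.1.map_adj h
            · exact (f.1.map_adj h).symm }
      injective' := by
        rintro ⟨u⟩ ⟨v⟩ h
        have huv : Setoid.ker f.1 u v := h
        rw [f.2] at huv
        exact Quotient.sound huv }
  invFun g := ⟨g.toHom.comp (F.toQuotientGraph hs), Setoid.ext fun _ _ =>
    g.injective.eq_iff.trans Quotient.eq⟩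
  left_inv _ := rfl
  right_inv _ := by ext ⟨_⟩; rfl

theorem isEmpty_homKer {F : SimpleGraph α} (G : SimpleGraph β) {s : Setoid α} {u v : α}
    (huv : F.Adj u v) (hs : s u v) : IsEmpty {f : F →g G // Setoid.ker f = s} :=
  ⟨fun ⟨f, hf⟩ => (f.map_adj huv).ne (by rw [← hf] at hs; exact hs)⟩

theorem card_hom_eq_card_copy_add [Finite α] [Finite β] (F : SimpleGraph α) (G : SimpleGraph β)
    [Fintype (Setoid α)] [DecidableEq (Setoid α)] :
    Nat.card (F →g G) = Nat.card (F.Copy G) +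
      ∑ s ∈ {⊥}ᶜ, Nat.card {f : F →g G // Setoid.ker f = s} := by
  rw [← Nat.card_congr (Equiv.sigmaFiberEquiv fun f : F →g G => Setoid.ker f), Nat.card_sigma,
    Fintype.sum_eq_add_sum_compl ⊥]
  congr 1
  exact Nat.card_congr ((Equiv.subtypeEquivRight fun f => Setoid.ker_eq_bot_iff).trans
    ⟨fun f => ⟨f.1, f.2⟩, fun f => ⟨f.toHom, f.injective⟩, fun _ => rfl, fun _ => rfl⟩)

end

section

universe u

variable {β β' : Type u} {G : SimpleGraph β} {G' : SimpleGraph β'}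

theorem card_copy_eq_of_card_hom_eq [Finite β] [Finite β'] {n : ℕ}
    (h : ∀ (α : Type u) [Finite α] (F : SimpleGraph α),
      Nat.card α ≤ n → Nat.card (F →g G) = Nat.card (F →g G'))
    {α : Type u} [Finite α] (F : SimpleGraph α) (hα : Nat.card α ≤ n) :
    Nat.card (F.Copy G) = Nat.card (F.Copy G') := by
  obtain ⟨k, hk⟩ : ∃ k, Nat.card α = k := ⟨_, rfl⟩
  induction k using Nat.strong_induction_on generalizing α with
  | _ k ih =>
  classical
  have := Fintype.ofFinite (Setoid α)
  have hfiber : ∀ s ∈ ({⊥}ᶜ : Finset (Setoid α)), Nat.card {f : F →g G // Setoid.ker f = s} =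
      Nat.card {f : F →g G' // Setoid.ker f = s} := by
    intro s hs
    by_cases hind : ∀ ⦃u v⦄, F.Adj u v → ¬ s u v
    · have hlt : Nat.card (Quotient s) < k := hk ▸ Setoid.card_quotient_lt (by simpa using hs)
      rw [Nat.card_congr (homKerEquivCopy G hind), Nat.card_congr (homKerEquivCopy G' hind)]
      exact ih _ hlt (F.quotientGraph s) (by omega) rfl
    · push Not at hind
      obtain ⟨u, v, huv, hsuv⟩ := hind
      have := isEmpty_homKer G huv hsuv
      have := isEmpty_homKer G' huv hsuv
      simp only [Nat.card_of_isEmpty]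
  have := h α F hα
  rw [card_hom_eq_card_copy_add, card_hom_eq_card_copy_add, Finset.sum_congr rfl hfiber] at this
  omega

theorem nonempty_iso_of_card_hom_eq [Finite β] [Finite β'] {n : ℕ}
    (h : ∀ (α : Type u) [Finite α] (F : SimpleGraph α),
      Nat.card α ≤ n → Nat.card (F →g G) = Nat.card (F →g G'))
    (hβ : Nat.card β ≤ n) (hβ' : Nat.card β' ≤ n) : Nonempty (G ≃g G') := by
  obtain ⟨f⟩ : Nonempty (G.Copy G') := Finite.card_pos_iff.1 <|
    card_copy_eq_of_card_hom_eq h G hβ ▸ Finite.card_pos_iff.2 ⟨.id G⟩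
  obtain ⟨g⟩ : Nonempty (G'.Copy G) := Finite.card_pos_iff.1 <|
    (card_copy_eq_of_card_hom_eq h G' hβ').symm ▸ Finite.card_pos_iff.2 ⟨.id G'⟩
  exact f.nonempty_iso g

theorem card_hom_eq_of_forall_fin {n : ℕ}
    (h : ∀ k ≤ n, ∀ F : SimpleGraph (Fin k), Nat.card (F →g G) = Nat.card (F →g G'))
    (α : Type*) [Finite α] (F : SimpleGraph α) (hα : Nat.card α ≤ n) :
    Nat.card (F →g G) = Nat.card (F →g G') := by
  let e : F ≃g F.map (Finite.equivFin α).toEmbedding := Iso.map _ F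
  rw [Nat.card_congr (e.homCongr (.refl (G := G))),
    Nat.card_congr (e.homCongr (.refl (G := G')))]
  exact h _ hα _

end

end SimpleGraph

open SimpleGraph

noncomputable def homSum (n : ℕ) {p q : ℕ} (G : SimpleGraph (Fin p)) (G' : SimpleGraph (Fin q)) :
    ℝ :=
  ∑ F : Σ k : Fin (n + 1), SimpleGraph (Fin k.val),
    (Nat.card (F.2 →g G) : ℝ) * (Nat.card (F.2 →g G') : ℝ)

section homSum

variable {p q : ℕ} (G : SimpleGraph (Fin p)) (G' : SimpleGraph (Fin q))

theorem homSum_comm (n : ℕ) : homSum n G G' = homSum n G' G :=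
  Finset.sum_congr rfl fun _ _ => mul_comm _ _

theorem homSum_eq_sum_range (n : ℕ) :
    homSum n G G' = ∑ k ∈ Finset.range (n + 1),
      ∑ F : SimpleGraph (Fin k), (Nat.card (F →g G) : ℝ) * (Nat.card (F →g G') : ℝ) := by
  rw [homSum, ← Fin.sum_univ_eq_sum_range (fun k => ∑ F : SimpleGraph (Fin k), _),
    ← Finset.univ_sigma_univ, Finset.sum_sigma]

theorem homSum_sub_two_mul_add (n : ℕ) :
    homSum n G G - 2 * homSum n G G' + homSum n G' G' =
      ∑ F : Σ k : Fin (n + 1), SimpleGraph (Fin k.val),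
        ((Nat.card (F.2 →g G) : ℝ) - Nat.card (F.2 →g G')) ^ 2 := by
  simp only [homSum, Finset.mul_sum, ← Finset.sum_sub_distrib, ← Finset.sum_add_distrib]
  exact Finset.sum_congr rfl fun _ _ => by ring

theorem homSum_self_lt (hp : 0 < p) {n N : ℕ} (hnN : n < N) : homSum n G G < homSum N G G := by
  rw [homSum_eq_sum_range, homSum_eq_sum_range]
  let c : (⊥ : SimpleGraph (Fin (n + 1))) →g G := ⟨fun _ => ⟨0, hp⟩, False.elim⟩
  have hbot : (1 : ℝ) ≤ Nat.card ((⊥ : SimpleGraph (Fin (n + 1))) →g G) :=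
    Nat.one_le_cast.2 (Finite.card_pos_iff.2 ⟨c⟩)
  refine Finset.sum_lt_sum_of_subset (i := n + 1) (Finset.range_subset_range.2 (by omega))
    (Finset.mem_range.2 (by omega)) (by simp) ?_
    fun _ _ _ => Finset.sum_nonneg fun _ _ => by positivity
  exact Finset.sum_pos' (fun _ _ => by positivity) ⟨⊥, Finset.mem_univ _, by nlinarith⟩

end homSum

section minKernel

variable {m m' : ℕ} (G : SimpleGraph (Fin m)) (G' : SimpleGraph (Fin m'))

theorem minKernel_eq_homSum : minKernel G G' = homSum (min m m') G G' := rfl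

theorem minKernel_comm : minKernel G G' = minKernel G' G := by
  rw [minKernel_eq_homSum, minKernel_eq_homSum, min_comm, homSum_comm]

theorem minKernel_dist_pos_of_lt (h : m < m') :
    0 < minKernel G G - 2 * minKernel G G' + minKernel G' G' := by
  have hsq : 0 ≤ homSum m G G - 2 * homSum m G G' + homSum m G' G' := by
    rw [homSum_sub_two_mul_add]
    exact Finset.sum_nonneg fun _ _ => sq_nonneg _
  have hlt := homSum_self_lt G' (by omega) h
  rw [minKernel_eq_homSum, minKernel_eq_homSum, minKernel_eq_homSum, min_self, min_self,
    min_eq_left h.le]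
  linarith

theorem minKernel_dist_pos_of_ne (h : m ≠ m') :
    0 < minKernel G G - 2 * minKernel G G' + minKernel G' G' := by
  rcases h.lt_or_gt with h | h
  · exact minKernel_dist_pos_of_lt G G' h
  · rw [minKernel_comm G G']
    linarith [minKernel_dist_pos_of_lt G' G h]

end minKernel

theorem minKernel_dist_eq_zero_iff {m : ℕ} (G G' : SimpleGraph (Fin m)) :
    minKernel G G - 2 * minKernel G G' + minKernel G' G' = 0 ↔
      ∀ k ≤ m, ∀ F : SimpleGraph (Fin k), Nat.card (F →g G) = Nat.card (F →g G') := by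
  rw [minKernel_eq_homSum, minKernel_eq_homSum, minKernel_eq_homSum, min_self,
    homSum_sub_two_mul_add, Finset.sum_eq_zero_iff_of_nonneg fun _ _ => sq_nonneg _]
  simp only [Finset.mem_univ, true_implies, sq_eq_zero_iff, sub_eq_zero, Nat.cast_inj]
  exact ⟨fun h k hk F => h ⟨⟨k, by omega⟩, F⟩, fun h F => h _ (by omega) F.2⟩

/-- The min kernel is a complete kernel on the set of all finite graphs:
`k_min(G,G) - 2k_min(G,G') + k_min(G',G') = 0` if and only if `G ≅ G'`. -/
theorem minKernel_complete (m m' : ℕ) (G : SimpleGraph (Fin m)) (G' : SimpleGraph (Fin m')) :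
    minKernel G G - 2 * minKernel G G' + minKernel G' G' = 0 ↔ Nonempty (G ≃g G') := by
  by_cases hm : m = m'
  · subst hm
    rw [minKernel_dist_eq_zero_iff]
    refine ⟨fun h => nonempty_iso_of_card_hom_eq (card_hom_eq_of_forall_fin h)
      (Nat.card_fin m).le (Nat.card_fin m).le, ?_⟩
    rintro ⟨e⟩ k - F
    exact Nat.card_congr (Iso.refl.homCongr e)
  · refine iff_of_false (minKernel_dist_pos_of_ne G G' hm).ne' fun ⟨e⟩ => hm ?_
    simpa using Nat.card_congr e.toEquiv
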